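/- (Lemma 1, curvature bound, blockwise form.) For every user k ∈ {1,…,K}, every α ∈ M, every s_k ∈ ℝ^n with ‖s_k‖₁ ≤ β, and every γ ∈ (0,1], letting α̂ be the vector equal to α except that its k-th block is replaced by (1 − γ)α_k + γ s_k, one has (2/γ²)·( f(α̂) − f(α) − γ·⟨s_k − α_k, ∇_k f(α)⟩ ) ≤ 4β²·d_k(w)·( c_k·‖A_k‖₁² + μ₁ ). Consequently the global product curvature constant C⊗_f = Σ_k C_f^k of f over M satisfies C⊗_f ≤ 4β² Σ_{k=1}^K d_k(w)·( c_k·‖A_k‖₁² + μ₁ ). -/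

import Mathlib

open scoped RealInnerProductSpace BigOperators

abbrev Vec (n : ℕ) := EuclideanSpace ℝ (Fin n)

/-- Degree of user `k`: `d_k(w) = Σ_{l≠k} w_{k,l}`. -/
def degW {K : ℕ} (W : Fin K → Fin K → ℝ) (k : Fin K) : ℝ :=
  ∑ l ∈ Finset.univ.filter (fun l => l ≠ k), W k l

/-- The boosting objective
`f(α) = Σ_k d_k(w) c_k log(Σ_i exp(−(A_k α_k)_i)) + (μ₁/2) Σ_{k<l} w_{k,l} ‖α_k − α_l‖²`. -/
noncomputable def fObj {K n : ℕ} {m : Fin K → ℕ}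
    (A : ∀ k, Matrix (Fin (m k)) (Fin n) ℝ) (c : Fin K → ℝ)
    (W : Fin K → Fin K → ℝ) (μ₁ : ℝ) (α : Fin K → Vec n) : ℝ :=
  (∑ k, degW W k * c k *
      Real.log (∑ i, Real.exp (-(Matrix.mulVec (A k) (α k) i))))
    + μ₁ / 2 * ∑ k, ∑ l ∈ Finset.univ.filter (fun l => k < l),
        W k l * ‖α k - α l‖ ^ 2

/-- The partial gradient `∇_k f(α)` of `f` with respect to the block `α_k`. -/
noncomputable def gradBlk {K n : ℕ} (f : (Fin K → Vec n) → ℝ)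
    (α : Fin K → Vec n) (k : Fin K) : Vec n :=
  gradient (fun x => f (Function.update α k x)) (α k)

/-- `‖A‖₁`: the maximum ℓ1 norm of a row of `A`. -/
noncomputable def rowNormOne {m n : ℕ} (A : Matrix (Fin m) (Fin n) ℝ) : ℝ :=
  ⨆ i, ∑ j, |A i j|

/-- The ℓ1 norm on `ℝ^n`. -/
def l1Norm {n : ℕ} (x : Vec n) : ℝ := ∑ j, |x j|

/-- The partial curvature constant `C_f^k` of `f` over `M` (a supremum of relative
deviations of `f` from its blockwise linear approximations). -/
noncomputable def blockCurvature {K n : ℕ} {m : Fin K → ℕ}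
    (A : ∀ k, Matrix (Fin (m k)) (Fin n) ℝ) (c : Fin K → ℝ)
    (W : Fin K → Fin K → ℝ) (μ₁ β : ℝ) (k : Fin K) : ℝ :=
  sSup {v : ℝ | ∃ (α : Fin K → Vec n) (s : Vec n) (γ : ℝ),
    (∀ j, l1Norm (α j) ≤ β) ∧ l1Norm s ≤ β ∧ 0 < γ ∧ γ ≤ 1 ∧
    v = 2 / γ ^ 2 *
      (fObj A c W μ₁ (Function.update α k ((1 - γ) • α k + γ • s))
        - fObj A c W μ₁ α
        - γ * ⟪s - α k, gradBlk (fObj A c W μ₁) α k⟫)}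

/-! With all blocks but the `k`-th fixed, `f` is `d_k c_k` times the log-exponential loss of
`A_k`, plus `(μ₁/2) Σ_{l ≠ k} w_{k,l} ‖x - α_l‖²` (this uses the symmetry of `w`), plus a
constant. The curvature term is `2/γ²` times the error of the first-order expansion of this
function at `α_k` in the direction `γ u`, `u = s_k - α_k`. For each quadratic the error is
exactly `‖γ u‖²`. For the log-exponential loss it is the centred cumulant generating function
of `-A_k u` under the Gibbs distribution at `α_k`, which Hoeffding's lemma bounds by
`(‖A_k‖₁ ‖γ u‖₁)² / 2`. Since `‖u‖₂ ≤ ‖u‖₁ ≤ 2β`, the blockwise bound follows, and summing it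
over `k` bounds the sum of the suprema. -/

open Finset Real MeasureTheory ProbabilityTheory
open scoped Matrix

theorem mgf_le_exp_integral_add {Ω : Type*} {mΩ : MeasurableSpace Ω} {μ : Measure Ω}
    [IsProbabilityMeasure μ] {X : Ω → ℝ} {a b : ℝ} (hX : AEMeasurable X μ)
    (hb : ∀ᵐ ω ∂μ, X ω ∈ Set.Icc a b) (t : ℝ) :
    mgf X μ t ≤ exp (t * μ[X] + ((b - a) / 2) ^ 2 * t ^ 2 / 2) := by
  have hoeffding := (hasSubgaussianMGF_of_mem_Icc hX hb).mgf_le t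
  have hcenter : mgf (fun ω => X ω - μ[X]) μ t = mgf X μ t * exp (-(t * μ[X])) := by
    simpa [sub_eq_add_neg] using mgf_add_const (X := X) (μ := μ) (t := t) (-μ[X])
  have hvar : (((‖b - a‖₊ / 2) ^ 2 : NNReal) : ℝ) = ((b - a) / 2) ^ 2 := by
    simp [div_pow]
  rw [hcenter, hvar, ← le_div_iff₀ (exp_pos _), ← exp_sub] at hoeffding
  exact hoeffding.trans_eq (congrArg exp (by ring))

/-- Hoeffding's lemma for the Gibbs distribution `i ↦ exp (Y i) / ∑ j, exp (Y j)`. -/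
theorem log_sum_exp_add_le {ι : Type*} [Fintype ι] [Nonempty ι] (Y w : ι → ℝ) {M : ℝ}
    (hw : ∀ i, |w i| ≤ M) :
    log (∑ i, exp (Y i + w i)) ≤
      log (∑ i, exp (Y i)) + (∑ i, exp (Y i) * w i) / (∑ i, exp (Y i)) + M ^ 2 / 2 := by
  let _ : MeasurableSpace ι := ⊤
  set S := ∑ i, exp (Y i)
  have hS : 0 < S := sum_pos (fun i _ => exp_pos _) univ_nonempty
  set P := (Measure.count : Measure ι).tilted Y
  have : IsProbabilityMeasure P := isProbabilityMeasure_tilted Integrable.of_finite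
  have hP (g : ι → ℝ) : ∫ i, g i ∂P = ∑ i, exp (Y i) / S * g i := by
    simp [P, integral_tilted, S]
  have hmgf : mgf w P 1 = (∑ i, exp (Y i + w i)) / S := by
    simp only [mgf, hP, one_mul, exp_add, sum_div]
    exact sum_congr rfl fun i _ => by ring
  have hmean : P[w] = (∑ i, exp (Y i) * w i) / S := by
    simp only [hP, sum_div]
    exact sum_congr rfl fun i _ => by ring
  have hoeffding := mgf_le_exp_integral_add (μ := P) (a := -M) (b := M)
    (measurable_of_countable w).aemeasurable (ae_of_all _ fun i => abs_le.mp (hw i)) 1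
  rw [hmgf, hmean, div_le_iff₀ hS, ← log_le_log_iff (by positivity) (by positivity),
    log_mul (exp_pos _).ne' hS.ne', log_exp] at hoeffding
  linarith

theorem hasDerivAt_log_sum_exp_add_mul {ι : Type*} [Fintype ι] [Nonempty ι] (Y w : ι → ℝ) :
    HasDerivAt (fun t => log (∑ i, exp (Y i + t * w i)))
      ((∑ i, exp (Y i) * w i) / ∑ i, exp (Y i)) 0 := by
  have hsum : HasDerivAt (fun t => ∑ i, exp (Y i + t * w i)) (∑ i, exp (Y i) * w i) 0 := by
    refine HasDerivAt.fun_sum fun i _ => ?_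
    simpa using ((hasDerivAt_mul_const (x := (0 : ℝ)) (w i)).const_add (Y i)).exp
  simpa using hsum.log (by positivity)

section LinearizationError

variable {E : Type*} [NormedAddCommGroup E] [NormedSpace ℝ E]

noncomputable def linearizationError (g : E → ℝ) (x v : E) : ℝ :=
  g (x + v) - g x - fderiv ℝ g x v

theorem linearizationError_add {f g : E → ℝ} {x : E} (hf : DifferentiableAt ℝ f x)
    (hg : DifferentiableAt ℝ g x) (v : E) :
    linearizationError (fun y => f y + g y) x v =
      linearizationError f x v + linearizationError g x v := by
  simp only [linearizationError, fderiv_fun_add hf hg, add_apply]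
  ring

theorem linearizationError_add_const (g : E → ℝ) (C : ℝ) (x v : E) :
    linearizationError (fun y => g y + C) x v = linearizationError g x v := by
  simp only [linearizationError, fderiv_add_const]
  ring

theorem linearizationError_const_mul {g : E → ℝ} {x : E} (hg : DifferentiableAt ℝ g x)
    (a : ℝ) (v : E) :
    linearizationError (fun y => a * g y) x v = a * linearizationError g x v := by
  simp only [linearizationError, fderiv_const_mul hg, smul_apply, smul_eq_mul]
  ring

theorem linearizationError_sum {ι : Type*} (s : Finset ι) {g : ι → E → ℝ} {x : E}
    (hg : ∀ i ∈ s, DifferentiableAt ℝ (g i) x) (v : E) :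
    linearizationError (fun y => ∑ i ∈ s, g i y) x v = ∑ i ∈ s, linearizationError (g i) x v := by
  simp only [linearizationError, fderiv_fun_sum hg, _root_.sum_apply, ← sum_sub_distrib]

end LinearizationError

theorem linearizationError_norm_sub_sq {F : Type*} [NormedAddCommGroup F]
    [InnerProductSpace ℝ F] (a x v : F) :
    linearizationError (fun y => ‖y - a‖ ^ 2) x v = ‖v‖ ^ 2 := by
  have hderiv : fderiv ℝ (fun y => ‖y - a‖ ^ 2) x = 2 • innerSL ℝ (x - a) := by
    simpa using (((hasFDerivAt_id x).sub_const a).norm_sq).fderiv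
  rw [linearizationError, hderiv, add_sub_right_comm, norm_add_sq_real]
  simp only [smul_apply, innerSL_apply_apply]
  ring

section NormBounds

variable {n : ℕ}

theorem l1Norm_nonneg (v : Vec n) : 0 ≤ l1Norm v :=
  sum_nonneg fun _ _ => abs_nonneg _

theorem l1Norm_smul (γ : ℝ) (v : Vec n) : l1Norm (γ • v) = |γ| * l1Norm v := by
  simp [l1Norm, abs_mul, mul_sum]

theorem l1Norm_sub_le (v w : Vec n) : l1Norm (v - w) ≤ l1Norm v + l1Norm w := by
  simpa [l1Norm, ← sum_add_distrib] using sum_le_sum fun j _ => abs_sub (v j) (w j)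

theorem norm_sq_le_l1Norm_sq (v : Vec n) : ‖v‖ ^ 2 ≤ l1Norm v ^ 2 := by
  rw [EuclideanSpace.norm_sq_eq, l1Norm]
  simpa using sum_sq_le_sq_sum_of_nonneg fun j _ => abs_nonneg (v j)

theorem abs_mulVec_le {m : ℕ} (B : Matrix (Fin m) (Fin n) ℝ) (v : Vec n) (i : Fin m) :
    |(B *ᵥ v) i| ≤ rowNormOne B * l1Norm v := by
  have hrow : ∑ j, |B i j| ≤ rowNormOne B :=
    le_ciSup (f := fun i => ∑ j, |B i j|) (Set.finite_range _).bddAbove i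
  calc |(B *ᵥ v) i| ≤ ∑ j, |B i j| * |v j| := by
        simpa [Matrix.mulVec, dotProduct, abs_mul] using
          abs_sum_le_sum_abs (fun j => B i j * v j) univ
    _ ≤ ∑ j, |B i j| * l1Norm v := by
        gcongr with j
        exact single_le_sum (f := fun j => |v j|) (fun j _ => abs_nonneg _) (mem_univ j)
    _ ≤ rowNormOne B * l1Norm v := by
        rw [← sum_mul]
        exact mul_le_mul_of_nonneg_right hrow (l1Norm_nonneg v)

end NormBounds

section LogExpLoss

variable {m n : ℕ} (B : Matrix (Fin m) (Fin n) ℝ)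

noncomputable def logExpLoss (x : Vec n) : ℝ := log (∑ i, exp (-(B *ᵥ x) i))

theorem logExpLoss_add_smul (x v : Vec n) (t : ℝ) :
    logExpLoss B (x + t • v) = log (∑ i, exp (-(B *ᵥ x) i + t * -(B *ᵥ v) i)) := by
  simp only [logExpLoss, WithLp.ofLp_add, WithLp.ofLp_smul, Matrix.mulVec_add, Matrix.mulVec_smul,
    Pi.add_apply, Pi.smul_apply, smul_eq_mul, neg_add, mul_neg]

theorem logExpLoss_of_isEmpty [IsEmpty (Fin m)] : logExpLoss B = 0 := by
  funext x
  simp [logExpLoss]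

theorem differentiable_logExpLoss : Differentiable ℝ (logExpLoss B) := by
  cases isEmpty_or_nonempty (Fin m)
  · rw [logExpLoss_of_isEmpty]
    exact differentiable_const 0
  · intro x
    refine DifferentiableAt.log ?_ (by positivity)
    simp only [Matrix.mulVec, dotProduct]
    fun_prop

theorem fderiv_logExpLoss_apply [Nonempty (Fin m)] (x v : Vec n) :
    fderiv ℝ (logExpLoss B) x v =
      (∑ i, exp (-(B *ᵥ x) i) * -(B *ᵥ v) i) / ∑ i, exp (-(B *ᵥ x) i) := by
  rw [← (differentiable_logExpLoss B x).lineDeriv_eq_fderiv]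
  refine HasLineDerivAt.lineDeriv ?_
  simpa [HasLineDerivAt, logExpLoss_add_smul] using
    hasDerivAt_log_sum_exp_add_mul (fun i => -(B *ᵥ x) i) (fun i => -(B *ᵥ v) i)

theorem linearizationError_logExpLoss_le (x v : Vec n) :
    linearizationError (logExpLoss B) x v ≤ (rowNormOne B * l1Norm v) ^ 2 / 2 := by
  cases isEmpty_or_nonempty (Fin m)
  · simp only [linearizationError, logExpLoss_of_isEmpty, Pi.zero_apply, fderiv_zero, zero_apply,
      sub_zero]
    positivity
  · have hoeffding := log_sum_exp_add_le (fun i => -(B *ᵥ x) i) (fun i => -(B *ᵥ v) i)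
      fun i => (abs_neg ((B *ᵥ v) i)).trans_le (abs_mulVec_le B v i)
    rw [linearizationError, fderiv_logExpLoss_apply, ← one_smul ℝ v, logExpLoss_add_smul,
      one_smul]
    simp only [one_mul] at hoeffding ⊢
    rw [logExpLoss]
    linarith

end LogExpLoss

theorem sum_sum_lt_eq_sum_ne_add {ι β : Type*} [Fintype ι] [LinearOrder ι] [AddCommMonoid β]
    (h : ι → ι → β) (hsymm : ∀ i j, h i j = h j i) (k : ι) :
    ∑ i, ∑ j ∈ univ.filter (fun j => i < j), h i j =
      ∑ j ∈ univ.filter (fun j => j ≠ k), h k j +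
        ∑ i ∈ univ.erase k, ∑ j ∈ (univ.filter (fun j => i < j)).erase k, h i j := by
  have hrow (i : ι) : ∑ j ∈ univ.filter (fun j => i < j), h i j =
      ∑ j ∈ (univ.filter (fun j => i < j)).erase k, h i j + if i < k then h k i else 0 := by
    split_ifs with hik
    · rw [hsymm, add_comm, add_sum_erase _ _ (by simpa using hik)]
    · rw [erase_eq_of_notMem (by simpa using hik), add_zero]
  have hsplit : ∑ j ∈ univ.filter (fun j => j ≠ k), h k j =
      ∑ j ∈ univ.filter (fun j => k < j), h k j +
        ∑ i ∈ univ.erase k, if i < k then h k i else 0 := by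
    rw [← sum_filter, filter_erase, erase_eq_of_notMem (by simp), ← sum_union]
    · refine sum_congr (ext fun j => ?_) fun _ _ => rfl
      simpa only [mem_filter, mem_univ, true_and, mem_union] using ne_iff_lt_or_gt.trans or_comm
    · exact disjoint_filter.mpr fun j _ hkj hjk => lt_asymm hkj hjk
  rw [← add_sum_erase _ _ (mem_univ k), sum_congr rfl fun i _ => hrow i, sum_add_distrib, hsplit]
  abel

theorem sub_sub_inner_gradBlk_eq {K n : ℕ} (f : (Fin K → Vec n) → ℝ) (α : Fin K → Vec n)
    (k : Fin K) (v : Vec n) :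
    f (Function.update α k (α k + v)) - f α - ⟪v, gradBlk f α k⟫ =
      linearizationError (fun x => f (Function.update α k x)) (α k) v := by
  rw [linearizationError, Function.update_eq_self, gradBlk, gradient, real_inner_comm,
    InnerProductSpace.toDual_symm_apply]

theorem degW_nonneg {K : ℕ} {W : Fin K → Fin K → ℝ} (hWnn : ∀ k l, k ≠ l → 0 ≤ W k l)
    (k : Fin K) : 0 ≤ degW W k :=
  sum_nonneg fun l hl => hWnn k l (mem_filter.mp hl).2.symm

section Objective

variable {K n : ℕ} {m : Fin K → ℕ} (A : ∀ k, Matrix (Fin (m k)) (Fin n) ℝ) (c : Fin K → ℝ)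
  (W : Fin K → Fin K → ℝ) (μ₁ : ℝ)

theorem exists_fObj_update_eq (hWsym : ∀ k l, W k l = W l k) (α : Fin K → Vec n) (k : Fin K) :
    ∃ C : ℝ, (fun x => fObj A c W μ₁ (Function.update α k x)) = fun x =>
      degW W k * c k * logExpLoss (A k) x
        + μ₁ / 2 * ∑ l ∈ univ.filter (fun l => l ≠ k), W k l * ‖x - α l‖ ^ 2 + C := by
  refine ⟨∑ i ∈ univ.erase k, degW W i * c i * logExpLoss (A i) (α i)
    + μ₁ / 2 * ∑ i ∈ univ.erase k, ∑ j ∈ (univ.filter (fun j => i < j)).erase k,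
        W i j * ‖α i - α j‖ ^ 2, funext fun x => ?_⟩
  have hloss : ∑ i, degW W i * c i * logExpLoss (A i) (Function.update α k x i) =
      degW W k * c k * logExpLoss (A k) x
        + ∑ i ∈ univ.erase k, degW W i * c i * logExpLoss (A i) (α i) := by
    rw [← add_sum_erase _ _ (mem_univ k), Function.update_self]
    exact congrArg _ (sum_congr rfl fun i hi => by rw [Function.update_of_ne (ne_of_mem_erase hi)])
  have hpairs := sum_sum_lt_eq_sum_ne_add
    (fun i j => W i j * ‖Function.update α k x i - Function.update α k x j‖ ^ 2)
    (fun i j => by rw [hWsym, norm_sub_rev]) k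
  have hpairs_k : ∑ l ∈ univ.filter (fun l => l ≠ k),
      W k l * ‖Function.update α k x k - Function.update α k x l‖ ^ 2 =
      ∑ l ∈ univ.filter (fun l => l ≠ k), W k l * ‖x - α l‖ ^ 2 :=
    sum_congr rfl fun l hl => by
      rw [Function.update_self, Function.update_of_ne (mem_filter.mp hl).2]
  have hpairs_rest : ∑ i ∈ univ.erase k, ∑ j ∈ (univ.filter (fun j => i < j)).erase k,
      W i j * ‖Function.update α k x i - Function.update α k x j‖ ^ 2 =
      ∑ i ∈ univ.erase k, ∑ j ∈ (univ.filter (fun j => i < j)).erase k,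
        W i j * ‖α i - α j‖ ^ 2 :=
    sum_congr rfl fun i hi => sum_congr rfl fun j hj => by
      rw [Function.update_of_ne (ne_of_mem_erase hi), Function.update_of_ne (ne_of_mem_erase hj)]
  simp only [fObj]
  rw [hpairs, hpairs_k, hpairs_rest]
  change ∑ i, _ * logExpLoss (A i) (Function.update α k x i) + _ = _
  rw [hloss]
  ring

theorem linearizationError_fObj_update (hWsym : ∀ k l, W k l = W l k) (α : Fin K → Vec n)
    (k : Fin K) (v : Vec n) :
    linearizationError (fun x => fObj A c W μ₁ (Function.update α k x)) (α k) v =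
      degW W k * c k * linearizationError (logExpLoss (A k)) (α k) v
        + μ₁ / 2 * degW W k * ‖v‖ ^ 2 := by
  obtain ⟨C, hC⟩ := exists_fObj_update_eq A c W μ₁ hWsym α k
  have hsq (l : Fin K) : DifferentiableAt ℝ (fun x : Vec n => ‖x - α l‖ ^ 2) (α k) :=
    (differentiableAt_id.sub_const _).norm_sq ℝ
  have hquad (l : Fin K) :
      linearizationError (fun x => W k l * ‖x - α l‖ ^ 2) (α k) v = W k l * ‖v‖ ^ 2 := by
    rw [linearizationError_const_mul (hsq l), linearizationError_norm_sub_sq]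
  rw [hC, linearizationError_add_const,
    linearizationError_add ((differentiable_logExpLoss _ _).const_mul _)
      ((DifferentiableAt.fun_sum fun l _ => (hsq l).const_mul _).const_mul _),
    linearizationError_const_mul (differentiable_logExpLoss _ _),
    linearizationError_const_mul (DifferentiableAt.fun_sum fun l _ => (hsq l).const_mul _),
    linearizationError_sum _ fun l _ => (hsq l).const_mul _]
  simp only [hquad, degW, ← sum_mul]
  ring

theorem linearizationError_fObj_update_le (hWsym : ∀ k l, W k l = W l k) (hμ₁ : 0 ≤ μ₁)
    {k : Fin K} (hc : 0 ≤ c k) (hdeg : 0 ≤ degW W k) (α : Fin K → Vec n) (v : Vec n) :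
    linearizationError (fun x => fObj A c W μ₁ (Function.update α k x)) (α k) v ≤
      degW W k * (c k * rowNormOne (A k) ^ 2 + μ₁) * l1Norm v ^ 2 / 2 := by
  rw [linearizationError_fObj_update A c W μ₁ hWsym]
  have hloss := linearizationError_logExpLoss_le (A k) (α k) v
  have hnorm := norm_sq_le_l1Norm_sq v
  calc degW W k * c k * linearizationError (logExpLoss (A k)) (α k) v
        + μ₁ / 2 * degW W k * ‖v‖ ^ 2
      ≤ degW W k * c k * ((rowNormOne (A k) * l1Norm v) ^ 2 / 2)
        + μ₁ / 2 * degW W k * l1Norm v ^ 2 := by gcongr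
    _ = degW W k * (c k * rowNormOne (A k) ^ 2 + μ₁) * l1Norm v ^ 2 / 2 := by ring

theorem curvature_term_le (hWsym : ∀ k l, W k l = W l k) (hμ₁ : 0 ≤ μ₁) {k : Fin K}
    (hc : 0 ≤ c k) (hdeg : 0 ≤ degW W k) {β γ : ℝ} (α : Fin K → Vec n) (s : Vec n)
    (hα : l1Norm (α k) ≤ β) (hs : l1Norm s ≤ β) (hγ : 0 < γ) :
    2 / γ ^ 2 *
        (fObj A c W μ₁ (Function.update α k ((1 - γ) • α k + γ • s))
          - fObj A c W μ₁ α
          - γ * ⟪s - α k, gradBlk (fObj A c W μ₁) α k⟫)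
      ≤ 4 * β ^ 2 * degW W k * (c k * rowNormOne (A k) ^ 2 + μ₁) := by
  have hstep : (1 - γ) • α k + γ • s = α k + γ • (s - α k) := by module
  rw [hstep, ← real_inner_smul_left, sub_sub_inner_gradBlk_eq]
  have hdist : l1Norm (s - α k) ≤ 2 * β := by linarith [l1Norm_sub_le s (α k)]
  have hsmul : l1Norm (γ • (s - α k)) ^ 2 = γ ^ 2 * l1Norm (s - α k) ^ 2 := by
    rw [l1Norm_smul, abs_of_pos hγ, mul_pow]
  calc 2 / γ ^ 2 * linearizationError (fun x => fObj A c W μ₁ (Function.update α k x))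
        (α k) (γ • (s - α k))
      ≤ 2 / γ ^ 2 * (degW W k * (c k * rowNormOne (A k) ^ 2 + μ₁)
          * (γ ^ 2 * l1Norm (s - α k) ^ 2) / 2) := by
        rw [← hsmul]
        gcongr
        exact linearizationError_fObj_update_le A c W μ₁ hWsym hμ₁ hc hdeg α _
    _ = degW W k * (c k * rowNormOne (A k) ^ 2 + μ₁) * l1Norm (s - α k) ^ 2 := by
        field_simp
    _ ≤ 4 * β ^ 2 * degW W k * (c k * rowNormOne (A k) ^ 2 + μ₁) := by
        have hcoef : 0 ≤ degW W k * (c k * rowNormOne (A k) ^ 2 + μ₁) := by positivity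
        nlinarith [pow_le_pow_left₀ (l1Norm_nonneg _) hdist 2]

end Objective

theorem curvature_bound_general
    (K n : ℕ) (m : Fin K → ℕ)
    (A : ∀ k, Matrix (Fin (m k)) (Fin n) ℝ)
    (c : Fin K → ℝ) (hc : ∀ k, 0 ≤ c k)
    (W : Fin K → Fin K → ℝ) (hWsym : ∀ k l, W k l = W l k)
    (hWnn : ∀ k l, k ≠ l → 0 ≤ W k l)
    (μ₁ : ℝ) (hμ₁ : 0 ≤ μ₁) (β : ℝ) :
    (∀ (k : Fin K) (α : Fin K → Vec n) (s : Vec n) (γ : ℝ),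
      (∀ j, l1Norm (α j) ≤ β) → l1Norm s ≤ β → 0 < γ → γ ≤ 1 →
      2 / γ ^ 2 *
          (fObj A c W μ₁ (Function.update α k ((1 - γ) • α k + γ • s))
            - fObj A c W μ₁ α
            - γ * ⟪s - α k, gradBlk (fObj A c W μ₁) α k⟫)
        ≤ 4 * β ^ 2 * degW W k * (c k * rowNormOne (A k) ^ 2 + μ₁)) ∧
    (∑ k, blockCurvature A c W μ₁ β k
      ≤ 4 * β ^ 2 * ∑ k, degW W k * (c k * rowNormOne (A k) ^ 2 + μ₁)) := by
  have hblock (k : Fin K) (α : Fin K → Vec n) (s : Vec n) (γ : ℝ) (hα : ∀ j, l1Norm (α j) ≤ β)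
      (hs : l1Norm s ≤ β) (hγ : 0 < γ) :=
    curvature_term_le A c W μ₁ hWsym hμ₁ (hc k) (degW_nonneg hWnn k) α s (hα k) hs hγ
  refine ⟨fun k α s γ hα hs hγ _ => hblock k α s γ hα hs hγ, ?_⟩
  rw [mul_sum]
  refine sum_le_sum fun k _ => Real.sSup_le ?_ ?_
  · rintro _ ⟨α, s, γ, hα, hs, hγ, -, rfl⟩
    simpa only [mul_assoc] using hblock k α s γ hα hs hγ
  · have := degW_nonneg hWnn k
    have := hc k
    positivity

/-- Curvature bound (Lemma 1, blockwise form).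
For every user `k`, feasible `α`, `s_k` with `‖s_k‖₁ ≤ β` and `γ ∈ (0,1]`,
`(2/γ²)(f(α̂) − f(α) − γ⟨s_k − α_k, ∇_k f(α)⟩) ≤ 4β² d_k(w)(c_k‖A_k‖₁² + μ₁)`;
consequently `C⊗_f = Σ_k C_f^k ≤ 4β² Σ_k d_k(w)(c_k‖A_k‖₁² + μ₁)`. -/
theorem curvature_bound
    (K n : ℕ) (hK : 1 ≤ K) (m : Fin K → ℕ)
    (A : ∀ k, Matrix (Fin (m k)) (Fin n) ℝ)
    (c : Fin K → ℝ) (hc : ∀ k, 0 ≤ c k)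
    (W : Fin K → Fin K → ℝ) (hWsym : ∀ k l, W k l = W l k)
    (hWnn : ∀ k l, k ≠ l → 0 ≤ W k l)
    (μ₁ : ℝ) (hμ₁ : 0 ≤ μ₁) (β : ℝ) (hβ : 0 < β) :
    (∀ (k : Fin K) (α : Fin K → Vec n) (s : Vec n) (γ : ℝ),
      (∀ j, l1Norm (α j) ≤ β) → l1Norm s ≤ β → 0 < γ → γ ≤ 1 →
      2 / γ ^ 2 *
          (fObj A c W μ₁ (Function.update α k ((1 - γ) • α k + γ • s))
            - fObj A c W μ₁ α
            - γ * ⟪s - α k, gradBlk (fObj A c W μ₁) α k⟫)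
        ≤ 4 * β ^ 2 * degW W k * (c k * rowNormOne (A k) ^ 2 + μ₁)) ∧
    (∑ k, blockCurvature A c W μ₁ β k
      ≤ 4 * β ^ 2 * ∑ k, degW W k * (c k * rowNormOne (A k) ^ 2 + μ₁)) :=
  curvature_bound_general K n m A c hc W hWsym hWnn μ₁ hμ₁ β
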